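/- arXiv:2305.07000 — 4 statements merged into one kernel-verified Lean document; each statement's English description precedes it below -/
import Mathlib

section
/- For n ≥ 3, α ∈ (0, 1/(n-1)) with α ≠ 1/n, and β ∈ (0, 1/n), with γ = α + (1-nα)β, the inequality γ²(1-(n-1)γ)² > (1-nα)⁴·β²(1-(n-1)β)² holds; equivalently, (1-nα)²/(β²(1-(n-1)β)²) - (1-nα)⁴/(γ²(1-(n-1)γ)²) > 0. -/
set_option maxHeartbeats 1000000 in
theorem gamma_squared_inequality (n : ℕ) (hn3 : 3 ≤ n) (α β : ℝ)
    (hα : α ∈ Set.Ioo (0 : ℝ) (1 / ((n : ℝ) - 1))) (hα' : α ≠ 1 / (n : ℝ))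
    (hβ : β ∈ Set.Ioo (0 : ℝ) (1 / (n : ℝ))) :
    (α + (1 - n * α) * β) ^ 2 * (1 - ((n : ℝ) - 1) * (α + (1 - n * α) * β)) ^ 2
      > (1 - n * α) ^ 4 * (β ^ 2 * (1 - ((n : ℝ) - 1) * β) ^ 2) ∧
    0 < (1 - n * α) ^ 2 / (β ^ 2 * (1 - ((n : ℝ) - 1) * β) ^ 2)
      - (1 - n * α) ^ 4 /
        ((α + (1 - n * α) * β) ^ 2 * (1 - ((n : ℝ) - 1) * (α + (1 - n * α) * β)) ^ 2) := by
  obtain ⟨hα0, hα1⟩ := hα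
  obtain ⟨hβ0, hβ1⟩ := hβ
  have hN : (3 : ℝ) ≤ (n : ℝ) := by exact_mod_cast hn3
  have hN0 : (0 : ℝ) < (n : ℝ) := by linarith
  have hN1 : (0 : ℝ) < (n : ℝ) - 1 := by linarith
  have hα1' : ((n : ℝ) - 1) * α < 1 := by
    have := (lt_div_iff₀ hN1).mp hα1; linarith
  have hβ1' : (n : ℝ) * β < 1 := by
    have := (lt_div_iff₀ hN0).mp hβ1; linarith
  have ht : 1 - (n : ℝ) * α ≠ 0 := by
    intro h
    exact hα' (by rw [eq_div_iff hN0.ne']; linarith)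
  have hγ0 : 0 < α + (1 - (n : ℝ) * α) * β := by
    nlinarith [mul_pos hα0 (show (0:ℝ) < 1 - (n:ℝ) * β by linarith)]
  have hγ1 : 0 < 1 - ((n : ℝ) - 1) * (α + (1 - (n : ℝ) * α) * β) := by
    nlinarith [mul_pos (show (0:ℝ) < 1 - (n:ℝ) * β by linarith)
      (show (0:ℝ) < 1 - ((n:ℝ) - 1) * α by linarith)]
  have hB0 : 0 < β * (1 - ((n : ℝ) - 1) * β) := mul_pos hβ0 (by linarith)
  have hA0 : 0 < (α + (1 - (n : ℝ) * α) * β) *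
      (1 - ((n : ℝ) - 1) * (α + (1 - (n : ℝ) * α) * β)) := mul_pos hγ0 hγ1
  have hP : 0 < 1 + ((n : ℝ) - 1) * (1 - (n : ℝ) * α) := by
    nlinarith [mul_pos hN0 (show (0:ℝ) < 1 - ((n:ℝ) - 1) * α by linarith)]
  have h1pt : 0 < 1 + (1 - (n : ℝ) * α) := by nlinarith
  -- key 1 : A - t^2 B > 0
  have hD : 0 < (α + (1 - (n : ℝ) * α) * β) *
      (1 - ((n : ℝ) - 1) * (α + (1 - (n : ℝ) * α) * β))
      - (1 - (n : ℝ) * α) ^ 2 * (β * (1 - ((n : ℝ) - 1) * β)) := by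
    have h1 : 0 < α * ((1 - (n : ℝ) * β) * (1 + ((n : ℝ) - 1) * (1 - (n : ℝ) * α))) :=
      mul_pos hα0 (mul_pos (by linarith) hP)
    have h2 : 0 < (n : ℝ) * (α * β) * (1 + (1 - (n : ℝ) * α)) :=
      mul_pos (mul_pos hN0 (mul_pos hα0 hβ0)) h1pt
    nlinarith [hN0, h1, h2]
  -- key 2 : A - t B > 0
  have hAmtB : 0 < (α + (1 - (n : ℝ) * α) * β) *
      (1 - ((n : ℝ) - 1) * (α + (1 - (n : ℝ) * α) * β))
      - (1 - (n : ℝ) * α) * (β * (1 - ((n : ℝ) - 1) * β)) := by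
    have h1 : 0 < α * ((1 - (n : ℝ) * β) *
        (1 - ((n : ℝ) - 1) * (α + (1 - (n : ℝ) * α) * β))) :=
      mul_pos hα0 (mul_pos (by linarith) hγ1)
    have h2 : 0 < α * β := mul_pos hα0 hβ0
    nlinarith [h1, h2]
  -- key 3 : A + t B > 0
  have hAptB : 0 < (α + (1 - (n : ℝ) * α) * β) *
      (1 - ((n : ℝ) - 1) * (α + (1 - (n : ℝ) * α) * β))
      + (1 - (n : ℝ) * α) * (β * (1 - ((n : ℝ) - 1) * β)) := by
    rcases le_or_gt 0 (1 - (n : ℝ) * α) with h | h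
    · nlinarith [mul_nonneg h hB0.le]
    · have hNα : 1 < (n : ℝ) * α := by linarith
      have hmt : ((n : ℝ) - 1) * ((n : ℝ) * α - 1) < 1 := by nlinarith
      have hαN : 1 / (n : ℝ) < α := by rw [div_lt_iff₀ hN0]; nlinarith
      have hq : 0 < α + 2 * (1 - (n : ℝ) * α) * β := by
        have h3 : 0 < β * (1 - ((n:ℝ) - 1) * ((n:ℝ) * α - 1)) := mul_pos hβ0 (by linarith)
        nlinarith [hβ1, hαN, h3]
      have h1 : 0 < (1 + ((n : ℝ) - 1) * (1 - (n : ℝ) * α)) *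
          (α + 2 * (1 - (n : ℝ) * α) * β) := mul_pos hP hq
      have h2 : 0 ≤ (n : ℝ) * (((n : ℝ) - 1) * ((((n : ℝ) * α - 1) *
          (1 + (1 - (n : ℝ) * α))) * β ^ 2)) := by
        apply mul_nonneg hN0.le
        apply mul_nonneg (by linarith)
        apply mul_nonneg (mul_nonneg (by linarith) (by linarith)) (by positivity)
      nlinarith [hN0, h1, h2]
  have ht2 : 0 < (1 - (n : ℝ) * α) ^ 2 := by positivity
  constructor
  · have hsum : 0 < (α + (1 - (n : ℝ) * α) * β) *
        (1 - ((n : ℝ) - 1) * (α + (1 - (n : ℝ) * α) * β))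
        + (1 - (n : ℝ) * α) ^ 2 * (β * (1 - ((n : ℝ) - 1) * β)) := by
      nlinarith [mul_nonneg ht2.le hB0.le]
    nlinarith [mul_pos hD hsum]
  · rw [sub_pos]
    have hB2 : 0 < β ^ 2 * (1 - ((n : ℝ) - 1) * β) ^ 2 :=
      mul_pos (pow_pos hβ0 2) (pow_pos (show (0:ℝ) < 1 - ((n:ℝ) - 1) * β by linarith) 2)
    have hA2 : 0 < (α + (1 - (n : ℝ) * α) * β) ^ 2 *
        (1 - ((n : ℝ) - 1) * (α + (1 - (n : ℝ) * α) * β)) ^ 2 :=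
      mul_pos (pow_pos hγ0 2) (pow_pos hγ1 2)
    rw [div_lt_div_iff₀ hA2 hB2]
    nlinarith [mul_pos (mul_pos ht2 hAmtB) hAptB]
end

section
/- For n ≥ 3 and α ∈ (0, 1/n), define η''(β) = 2(n-1)(1-nα)²·log(β/(1-(n-1)β)) - (1-nα)²·(1-2(n-1)β)/(β(1-(n-1)β)) - 2(n-1)(1-nα)³·log(γ/(1-(n-1)γ)) + (1-nα)³·(1-2(n-1)γ)/(γ(1-(n-1)γ)), where γ = α + (1-nα)β. Then η'' evaluated at β = 1/n equals (n-2)·n²·α·(1-nα)², which is strictly positive. -/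
/-- The second derivative η'' from the proof of Lemma 3, with γ = α + (1-nα)β. -/
noncomputable def etaSecond (n : ℕ) (α : ℝ) (β : ℝ) : ℝ :=
  2 * ((n : ℝ) - 1) * (1 - n * α) ^ 2 * Real.log (β / (1 - ((n : ℝ) - 1) * β))
    - (1 - n * α) ^ 2 * (1 - 2 * ((n : ℝ) - 1) * β) / (β * (1 - ((n : ℝ) - 1) * β))
    - 2 * ((n : ℝ) - 1) * (1 - n * α) ^ 3
      * Real.log ((α + (1 - n * α) * β) / (1 - ((n : ℝ) - 1) * (α + (1 - n * α) * β)))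
    + (1 - n * α) ^ 3 * (1 - 2 * ((n : ℝ) - 1) * (α + (1 - n * α) * β))
      / ((α + (1 - n * α) * β) * (1 - ((n : ℝ) - 1) * (α + (1 - n * α) * β)))

theorem etaSecond_at_inv_n (n : ℕ) (hn3 : 3 ≤ n) (α : ℝ)
    (hα : α ∈ Set.Ioo (0 : ℝ) (1 / (n : ℝ))) :
    etaSecond n α (1 / (n : ℝ)) = ((n : ℝ) - 2) * (n : ℝ) ^ 2 * α * (1 - n * α) ^ 2 ∧
    0 < ((n : ℝ) - 2) * (n : ℝ) ^ 2 * α * (1 - n * α) ^ 2 := by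
  obtain ⟨hα0, hα1⟩ := hα
  have hn : (0 : ℝ) < n := by
    have : (3:ℝ) ≤ n := by exact_mod_cast hn3
    linarith
  have hne : (n:ℝ) ≠ 0 := ne_of_gt hn
  have hγ : α + (1 - n * α) * (1/(n:ℝ)) = 1/(n:ℝ) := by field_simp; ring
  have hβ1 : 1 - ((n : ℝ) - 1) * (1/(n:ℝ)) = 1/(n:ℝ) := by field_simp; ring
  have hlog : Real.log ((1/(n:ℝ)) / (1 - ((n : ℝ) - 1) * (1/(n:ℝ)))) = 0 := by
    rw [hβ1, div_self (by positivity)]; exact Real.log_one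
  have hnα : 1 - n * α > 0 := by
    rw [lt_div_iff₀ hn] at hα1; linarith
  constructor
  · unfold etaSecond
    rw [hγ, hlog, hβ1]
    field_simp
    ring
  · have h2 : (2:ℝ) < n := by
      have : (3:ℝ) ≤ n := by exact_mod_cast hn3
      linarith
    have : (0:ℝ) < (n:ℝ) - 2 := by linarith
    positivity
end

section
/- Let φ: [0, L] → ℝ be differentiable with φ(0) = 0, and suppose there are R_s < R_c in (0, L) such that φ is strictly convex on [0, R_s], strictly concave on [R_s, L], and φ'(R_c) = φ(R_c)/R_c. Then φ(R) < (φ(R_c)/R_c)·R for all R ∈ (0, R_c) ∪ (R_c, L]. -/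
theorem below_tangent_line (L : ℝ) (hL : 0 < L) (φ : ℝ → ℝ)
    (hdiff : Differentiable ℝ φ) (h0 : φ 0 = 0)
    (Rs Rc : ℝ) (hRs : Rs ∈ Set.Ioo (0 : ℝ) L) (hRc : Rc ∈ Set.Ioo (0 : ℝ) L)
    (hlt : Rs < Rc)
    (hconv : StrictConvexOn ℝ (Set.Icc 0 Rs) φ)
    (hconc : StrictConcaveOn ℝ (Set.Icc Rs L) φ)
    (htan : deriv φ Rc = φ Rc / Rc) :
    ∀ R ∈ Set.Ioo (0 : ℝ) Rc ∪ Set.Ioc Rc L, φ R < (φ Rc / Rc) * R := by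
  obtain ⟨hRs0, hRsL⟩ := hRs
  obtain ⟨hRc0, hRcL⟩ := hRc
  set m := φ Rc / Rc with hm
  have hφRc : φ Rc = m * Rc := by rw [hm, div_mul_cancel₀ _ hRc0.ne']
  have hRcS : Rc ∈ Set.Icc Rs L := ⟨hlt.le, hRcL.le⟩
  -- Key: strictly below tangent on the concave interval
  have key : ∀ x ∈ Set.Icc Rs L, x ≠ Rc → φ x < m * x := by
    intro x hx hne
    rcases lt_or_gt_of_ne hne with h | h
    · have h1 := hconc.deriv_lt_slope hx hRcS h (hdiff Rc)
      rw [htan, slope_def_field] at h1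
      rw [div_lt_div_iff₀ (by linarith) (by linarith)] at h1
      nlinarith
    · have h1 := hconc.slope_lt_deriv hRcS hx h (hdiff Rc)
      rw [htan, slope_def_field] at h1
      rw [div_lt_iff₀ (by linarith)] at h1
      nlinarith
  intro R hR
  rcases hR with ⟨hR0, hRRc⟩ | ⟨hRcR, hRL⟩
  · rcases le_or_gt Rs R with hRsR | hRRs
    · exact key R ⟨hRsR, by linarith⟩ (ne_of_lt hRRc)
    · -- convex part: 0 < R < Rs
      have hφRs : φ Rs < m * Rs := key Rs ⟨le_refl _, hRsL.le⟩ (ne_of_lt hlt)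
      set lam := R / Rs with hlam
      have hlam0 : 0 < lam := div_pos hR0 hRs0
      have hlam1 : lam < 1 := (div_lt_one hRs0).mpr hRRs
      have hcv := hconv.2 (Set.mem_Icc.mpr ⟨le_refl _, hRs0.le⟩)
        (Set.mem_Icc.mpr ⟨hRs0.le, le_refl _⟩) (by linarith)
        (sub_pos.mpr hlam1) hlam0 (by ring)
      have hx : (1 - lam) • (0 : ℝ) + lam • Rs = R := by
        rw [hlam, smul_eq_mul, smul_eq_mul, mul_zero, zero_add, div_mul_cancel₀ _ hRs0.ne']
      rw [hx] at hcv
      simp only [smul_eq_mul, h0, mul_zero, zero_add] at hcv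
      have : lam * φ Rs < lam * (m * Rs) := by nlinarith
      have hR' : lam * Rs = R := by rw [hlam, div_mul_cancel₀ _ hRs0.ne']
      calc φ R < lam * (m * Rs) := lt_trans hcv this
        _ = m * R := by rw [← hR']; ring
  · exact key R ⟨by linarith, hRL⟩ (ne_of_gt hRcR)
end

section
/- Let X be uniform on an alphabet 𝒳 of size n ≥ 2, and let T on alphabet 𝒯 with |𝒯| ≤ n be jointly distributed with X such that: (a) there exists t₀ ∈ 𝒯 with p_{X|T}(·|t₀) uniform on 𝒳; (b) for every t ∈ 𝒯 \ {t₀}, the conditional distribution p_{X|T}(·|t) is a permutation of (1-(n-1)β_t, β_t, ..., β_t) with β_t ≤ 1/n; and (c) there exists t₁ ∈ 𝒯, t₁ ≠ t₀, with β_{t₁} < 1/n and p_T(t₁) > 0. Then a contradiction follows; i.e., no such T exists. Equivalently, such a structure forces |𝒯| ≥ n+1. -/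
open Finset

theorem no_small_representation {𝒳 𝒯 : Type*} [Fintype 𝒳] [Fintype 𝒯] [DecidableEq 𝒳]
    (n : ℕ) (hcard : Fintype.card 𝒳 = n) (hn2 : 2 ≤ n)
    (hT : Fintype.card 𝒯 ≤ n)
    (pT : 𝒯 → ℝ) (q : 𝒯 → 𝒳 → ℝ)  -- p_T and the reverse channel p_{X|T}
    (hpT0 : ∀ t, 0 ≤ pT t) (hpT1 : ∑ t, pT t = 1)
    (hq0 : ∀ t x, 0 ≤ q t x) (hq1 : ∀ t, ∑ x, q t x = 1)
    (hmarg : ∀ x, ∑ t, pT t * q t x = 1 / n)  -- X is uniform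
    (t₀ : 𝒯) (ht₀ : ∀ x, q t₀ x = 1 / n)
    (β : 𝒯 → ℝ)
    (hperm : ∀ t, t ≠ t₀ → β t ≤ 1 / n ∧
      ∃ xstar : 𝒳, q t xstar = 1 - ((n : ℝ) - 1) * β t ∧ ∀ x, x ≠ xstar → q t x = β t)
    (t₁ : 𝒯) (ht₁ : t₁ ≠ t₀) (hβ₁ : β t₁ < 1 / n) (hpt₁ : 0 < pT t₁) :
    False := by
  classical
  have hXne : Nonempty 𝒳 := Fintype.card_pos_iff.mp (by omega)
  -- choose the spike location for each t ≠ t₀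
  have hg : ∀ t : 𝒯, ∃ x : 𝒳, t ≠ t₀ → ∀ y, y ≠ x → q t y = β t := by
    intro t
    by_cases h : t = t₀
    · exact ⟨Classical.arbitrary 𝒳, fun h' => absurd h h'⟩
    · obtain ⟨xs, _, hxs⟩ := (hperm t h).2
      exact ⟨xs, fun _ => hxs⟩
  choose g hgspec using hg
  -- the image of the spikes over t ≠ t₀ misses some x
  set S : Finset 𝒯 := univ.erase t₀ with hS
  have hScard : S.card < Fintype.card 𝒯 := by
    rw [hS, Finset.card_erase_of_mem (Finset.mem_univ t₀), Finset.card_univ]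
    have : 0 < Fintype.card 𝒯 := Fintype.card_pos_iff.mpr ⟨t₀⟩
    omega
  have himg : (S.image g).card < Fintype.card 𝒳 := by
    calc (S.image g).card ≤ S.card := Finset.card_image_le
      _ < Fintype.card 𝒯 := hScard
      _ ≤ n := hT
      _ = Fintype.card 𝒳 := hcard.symm
  obtain ⟨x, hx⟩ : ∃ x : 𝒳, x ∉ S.image g := by
    by_contra h
    push_neg at h
    have : (univ : Finset 𝒳) ⊆ S.image g := fun y _ => h y
    have := Finset.card_le_card this
    simp only [Finset.card_univ] at this
    omega
  -- on such x, every t ≠ t₀ has q t x = β t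
  have hqx : ∀ t ∈ S, q t x = β t := by
    intro t ht
    have htne : t ≠ t₀ := (Finset.mem_erase.mp ht).1
    have hxg : x ≠ g t := by
      intro hxeq
      exact hx (Finset.mem_image.mpr ⟨t, ht, hxeq.symm⟩)
    exact hgspec t htne x hxg
  have hnpos : (0 : ℝ) < n := by
    have : (0 : ℕ) < n := by omega
    exact_mod_cast this
  -- compute marginal at x and derive strict inequality
  have hsplit : ∑ t, pT t * q t x = pT t₀ * (1 / n) + ∑ t ∈ S, pT t * q t x := by
    rw [← Finset.add_sum_erase _ _ (Finset.mem_univ t₀), ht₀ x]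
  have ht₁S : t₁ ∈ S := Finset.mem_erase.mpr ⟨ht₁, Finset.mem_univ t₁⟩
  have hlt : ∑ t ∈ S, pT t * q t x < ∑ t ∈ S, pT t * (1 / n) := by
    apply Finset.sum_lt_sum
    · intro t ht
      rw [hqx t ht]
      exact mul_le_mul_of_nonneg_left ((hperm t (Finset.mem_erase.mp ht).1).1) (hpT0 t)
    · exact ⟨t₁, ht₁S, by
        rw [hqx t₁ ht₁S]
        exact mul_lt_mul_of_pos_left hβ₁ hpt₁⟩
  have hsum : pT t₀ * (1 / n) + ∑ t ∈ S, pT t * (1 / n) = 1 / n := by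
    rw [Finset.add_sum_erase _ (fun t => pT t * (1 / n)) (Finset.mem_univ t₀),
      ← Finset.sum_mul, hpT1, one_mul]
  have : (1 : ℝ) / n < 1 / n := by
    calc (1 : ℝ) / n = ∑ t, pT t * q t x := (hmarg x).symm
      _ = pT t₀ * (1 / n) + ∑ t ∈ S, pT t * q t x := hsplit
      _ < pT t₀ * (1 / n) + ∑ t ∈ S, pT t * (1 / n) := by linarith
      _ = 1 / n := hsum
  exact lt_irrefl _ this
end
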